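/- arXiv:1210.5015 — 3 statements merged into one kernel-verified Lean document; each statement's English description precedes it below -/
import Mathlib

section
/- Let k, κ be nonzero real numbers and let L be a real Lie algebra possessing a basis (T, N1, N2) (so L is 3-dimensional) whose brackets satisfy ⁅T,N1⁆ = κ·N2 − k·T, ⁅T,N2⁆ = −κ·N1, and ⁅N1,N2⁆ = −k·N2. Then the linear map L → sl(2,ℝ) determined on the basis by T ↦ E1, N1 ↦ −E3, N2 ↦ E2, where E1, E2, E3 are formed with a = κ/2 and b = k/2, is an isomorphism of Lie algebras. In particular, L is isomorphic to sl(2,ℝ). -/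
/-- `E1 = a·[[0,1],[−1,0]]` as a 2×2 real matrix. -/
noncomputable def E1 (a : ℝ) : Matrix (Fin 2) (Fin 2) ℝ := a • !![0, 1; -1, 0]

/-- `E2 = 2b·[[0,1],[0,0]]` as a 2×2 real matrix. -/
noncomputable def E2 (b : ℝ) : Matrix (Fin 2) (Fin 2) ℝ := (2 * b) • !![0, 1; 0, 0]

/-- `E3 = b·[[1,0],[0,−1]]` as a 2×2 real matrix. -/
noncomputable def E3 (b : ℝ) : Matrix (Fin 2) (Fin 2) ℝ := b • !![1, 0; 0, -1]

/-!
The images `E1 (κ/2), -E3 (k/2), E2 (k/2)` of the basis satisfy the same three bracket relations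
as `T, N1, N2` (a direct matrix computation), and by bilinearity and antisymmetry these determine
the bracket. Their coordinates in the standard basis of `sl(2,ℝ)` have determinant `k²κ/4 ≠ 0`,
so they form a basis and the linear map they define is bijective.
-/

open LieAlgebra.SpecialLinear

namespace LinearMap

variable {R L L' ι : Type*} [CommRing R] [LieRing L] [LieAlgebra R L] [LieRing L']
  [LieAlgebra R L'] [LinearOrder ι]

theorem map_lie_of_basis (f : L →ₗ[R] L') (b : Module.Basis ι R L)
    (h : ∀ i j, i < j → f ⁅b i, b j⁆ = ⁅f (b i), f (b j)⁆) (x y : L) :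
    f ⁅x, y⁆ = ⁅f x, f y⁆ := by
  have hb : ∀ i j, f ⁅b i, b j⁆ = ⁅f (b i), f (b j)⁆ := by
    intro i j
    rcases lt_trichotomy i j with hij | rfl | hji
    · exact h i j hij
    · simp
    · rw [← lie_skew, map_neg, h j i hji, lie_skew]
  have hbilin := LinearMap.ext_basis b b
    (B := (LieModule.toEnd R L L : L →ₗ[R] Module.End R L).compr₂ f)
    (B' := ((LieModule.toEnd R L' L' : L' →ₗ[R] Module.End R L') ∘ₗ f).compl₂ f) hb
  exact congr($hbilin x y)

end LinearMap

def LieEquiv.ofLinearEquiv {R L L' : Type*} [CommRing R] [LieRing L] [LieAlgebra R L]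
    [LieRing L'] [LieAlgebra R L'] (e : L ≃ₗ[R] L') (h : ∀ x y, e ⁅x, y⁆ = ⁅e x, e y⁆) :
    L ≃ₗ⁅R⁆ L' :=
  { e with map_lie' := h _ _ }

theorem LieAlgebra.SpecialLinear.mem_sl_fin_two_iff {R : Type*} [CommRing R]
    (A : Matrix (Fin 2) (Fin 2) R) : A ∈ sl (Fin 2) R ↔ A 0 0 + A 1 1 = 0 := by
  simp [sl, Matrix.trace_fin_two]

section StandardBasis

variable (R : Type*) [CommRing R]

def slTwoEquivFinThree : sl (Fin 2) R ≃ₗ[R] (Fin 3 → R) where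
  toFun A := ![A.1 0 0, A.1 0 1, A.1 1 0]
  invFun x := ⟨!![x 0, x 1; x 2, -x 0], by simp [mem_sl_fin_two_iff]⟩
  map_add' A B := by ext i; fin_cases i <;> rfl
  map_smul' c A := by ext i; fin_cases i <;> rfl
  left_inv A := by
    have htrace := (mem_sl_fin_two_iff A.1).1 A.2
    ext i j; fin_cases i <;> fin_cases j <;> simp [eq_neg_of_add_eq_zero_right htrace]
  right_inv x := by ext i; fin_cases i <;> rfl

noncomputable def slTwoBasis : Module.Basis (Fin 3) R (sl (Fin 2) R) :=
  (Pi.basisFun R (Fin 3)).map (slTwoEquivFinThree R).symm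

theorem slTwoBasis_repr (A : sl (Fin 2) R) :
    (slTwoBasis R).repr A = ![A.1 0 0, A.1 0 1, A.1 1 0] :=
  rfl

end StandardBasis

section Frame

theorem E1_mem_sl (a : ℝ) : E1 a ∈ sl (Fin 2) ℝ := by
  simp [mem_sl_fin_two_iff, E1]

theorem E2_mem_sl (b : ℝ) : E2 b ∈ sl (Fin 2) ℝ := by
  simp [mem_sl_fin_two_iff, E2]

theorem E3_mem_sl (b : ℝ) : E3 b ∈ sl (Fin 2) ℝ := by
  simp [mem_sl_fin_two_iff, E3]

theorem E1_lie_neg_E3 (a b : ℝ) : ⁅E1 a, -E3 b⁆ = (2 * a) • E2 b - (2 * b) • E1 a := by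
  ext i j; fin_cases i <;> fin_cases j <;> simp [E1, E2, E3, Ring.lie_def] <;> ring

theorem E1_lie_E2 (a b : ℝ) : ⁅E1 a, E2 b⁆ = (2 * a) • E3 b := by
  ext i j; fin_cases i <;> fin_cases j <;> simp [E1, E2, E3, Ring.lie_def] <;> ring

theorem neg_E3_lie_E2 (b c : ℝ) : ⁅-E3 b, E2 c⁆ = -(2 * b) • E2 c := by
  ext i j; fin_cases i <;> fin_cases j <;> simp [E2, E3, Ring.lie_def]; ring

variable (k κ : ℝ)

noncomputable def slTwoFrame : Fin 3 → sl (Fin 2) ℝ :=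
  ![⟨E1 (κ / 2), E1_mem_sl _⟩, -⟨E3 (k / 2), E3_mem_sl _⟩, ⟨E2 (k / 2), E2_mem_sl _⟩]

theorem slTwoFrame_lie_zero_one :
    ⁅slTwoFrame k κ 0, slTwoFrame k κ 1⁆ = κ • slTwoFrame k κ 2 - k • slTwoFrame k κ 0 := by
  ext1
  change ⁅E1 (κ / 2), -E3 (k / 2)⁆ = κ • E2 (k / 2) - k • E1 (κ / 2)
  rw [E1_lie_neg_E3]
  module

theorem slTwoFrame_lie_zero_two :
    ⁅slTwoFrame k κ 0, slTwoFrame k κ 2⁆ = (-κ) • slTwoFrame k κ 1 := by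
  ext1
  change ⁅E1 (κ / 2), E2 (k / 2)⁆ = (-κ) • -E3 (k / 2)
  rw [E1_lie_E2]
  module

theorem slTwoFrame_lie_one_two :
    ⁅slTwoFrame k κ 1, slTwoFrame k κ 2⁆ = (-k) • slTwoFrame k κ 2 := by
  ext1
  change ⁅-E3 (k / 2), E2 (k / 2)⁆ = (-k) • E2 (k / 2)
  rw [neg_E3_lie_E2]
  module

theorem slTwoBasis_det_slTwoFrame :
    (slTwoBasis ℝ).det (slTwoFrame k κ) = k ^ 2 * κ / 4 := by
  rw [Module.Basis.det_apply, Matrix.det_fin_three]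
  simp [Module.Basis.toMatrix_apply, slTwoBasis_repr, slTwoFrame, E1, E2, E3]
  ring

variable {k κ}

noncomputable def slTwoFrameBasis (hk : k ≠ 0) (hκ : κ ≠ 0) :
    Module.Basis (Fin 3) ℝ (sl (Fin 2) ℝ) :=
  have hdet : IsUnit ((slTwoBasis ℝ).det (slTwoFrame k κ)) := by
    rw [slTwoBasis_det_slTwoFrame]
    exact isUnit_iff_ne_zero.2 (by positivity)
  have hbasis := (slTwoBasis ℝ).is_basis_iff_det.2 hdet
  .mk hbasis.1 hbasis.2.ge

theorem coe_slTwoFrameBasis (hk : k ≠ 0) (hκ : κ ≠ 0) :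
    ⇑(slTwoFrameBasis hk hκ) = slTwoFrame k κ := by
  simp [slTwoFrameBasis]

end Frame

/-- Let `k, κ` be nonzero reals and `L` a real Lie algebra with a basis `(T, N1, N2)`
satisfying `⁅T,N1⁆ = κ·N2 − k·T`, `⁅T,N2⁆ = −κ·N1`, `⁅N1,N2⁆ = −k·N2`.  Then the linear
map `L → sl(2,ℝ)` determined on the basis by `T ↦ E1`, `N1 ↦ −E3`, `N2 ↦ E2` (with
`a = κ/2`, `b = k/2`) is an isomorphism of Lie algebras; in particular `L ≅ sl(2,ℝ)`. -/
theorem stmt4 {L : Type*} [LieRing L] [LieAlgebra ℝ L]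
    (k κ : ℝ) (hk : k ≠ 0) (hκ : κ ≠ 0)
    (T N1 N2 : L)
    (bL : Module.Basis (Fin 3) ℝ L) (hbL : ⇑bL = ![T, N1, N2])
    (h1 : ⁅T, N1⁆ = κ • N2 - k • T)
    (h2 : ⁅T, N2⁆ = (-κ) • N1)
    (h3 : ⁅N1, N2⁆ = (-k) • N2) :
    ∃ e : L ≃ₗ⁅ℝ⁆ (LieAlgebra.SpecialLinear.sl (Fin 2) ℝ),
      (e T : Matrix (Fin 2) (Fin 2) ℝ) = E1 (κ / 2) ∧
      (e N1 : Matrix (Fin 2) (Fin 2) ℝ) = -(E3 (k / 2)) ∧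
      (e N2 : Matrix (Fin 2) (Fin 2) ℝ) = E2 (k / 2) := by
  have hT : bL 0 = T := by simp [hbL]
  have hN1 : bL 1 = N1 := by simp [hbL]
  have hN2 : bL 2 = N2 := by simp [hbL]
  subst hT hN1 hN2
  set f := bL.equiv (slTwoFrameBasis hk hκ) (Equiv.refl _)
  have hf : ∀ i, f (bL i) = slTwoFrame k κ i := fun i => by
    simp [f, Module.Basis.equiv_apply, coe_slTwoFrameBasis]
  have hlie : ∀ i j, i < j → f ⁅bL i, bL j⁆ = ⁅f (bL i), f (bL j)⁆ := by
    intro i j hij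
    obtain ⟨rfl, rfl⟩ | ⟨rfl, rfl⟩ | ⟨rfl, rfl⟩ :
        (i = 0 ∧ j = 1) ∨ (i = 0 ∧ j = 2) ∨ (i = 1 ∧ j = 2) := by
      revert i j; decide
    · rw [h1, map_sub, map_smul, map_smul, hf, hf, hf, slTwoFrame_lie_zero_one]
    · rw [h2, map_smul, hf, hf, hf, slTwoFrame_lie_zero_two]
    · rw [h3, map_smul, hf, hf, slTwoFrame_lie_one_two]
  exact ⟨LieEquiv.ofLinearEquiv f (f.toLinearMap.map_lie_of_basis bL hlie),
    congr_arg Subtype.val (hf 0), congr_arg Subtype.val (hf 1), congr_arg Subtype.val (hf 2)⟩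
end

section
/- Let α, β, κ ∈ ℝ with κ ≠ 0, let g(t) = sinh(α)·cos(κt+β) + cosh(α) (which is strictly positive), and define φ : ℝ → ℝ by φ(t) = −log(g(t)). Then for all t ∈ ℝ: e^{−φ(t)}·(φ′(t))² + κ²·(e^{φ(t)} + e^{−φ(t)}) = 2κ²·cosh(α). In particular, the left-hand side is constant in t. -/
/-!
Writing `g = e^{-φ}`, one has `φ' = -g'/g`, so the left-hand side equals
`(g'² + κ²(g² + 1)) / g`. For `g = sinh α · cos θ + cosh α` with `θ = κt + β`, the numerator
is `κ²(sinh² α + 2 sinh α cosh α cos θ + cosh² α + 1) = 2κ² cosh α · g` by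
`sin² + cos² = 1` and `cosh² = sinh² + 1`. Positivity of `g` is `|sinh α| < cosh α`.
-/

open Real

namespace Real

theorem abs_sinh_lt_cosh (x : ℝ) : |sinh x| < cosh x := by
  refine abs_lt.mpr ⟨?_, sinh_lt_cosh x⟩
  exact neg_lt.mp (by simpa using sinh_lt_cosh (-x))

theorem sinh_mul_cos_add_cosh_pos (x θ : ℝ) : 0 < sinh x * cos θ + cosh x := by
  have h : |sinh x * cos θ| ≤ |sinh x| := by
    rw [abs_mul]
    exact mul_le_of_le_one_right (abs_nonneg _) (abs_cos_le_one θ)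
  linarith [neg_abs_le (sinh x * cos θ), abs_sinh_lt_cosh x]

theorem first_integral_sinh_mul_cos_add_cosh (x θ κ : ℝ) :
    (sinh x * (sin θ * κ)) ^ 2 + κ ^ 2 * ((sinh x * cos θ + cosh x) ^ 2 + 1) =
      2 * κ ^ 2 * cosh x * (sinh x * cos θ + cosh x) := by
  linear_combination (κ ^ 2 * sinh x ^ 2) * sin_sq_add_cos_sq θ - κ ^ 2 * cosh_sq x

end Real

theorem exp_neg_mul_deriv_sq_add_of_eq_neg_log {g φ : ℝ → ℝ} {g' t : ℝ} (κ : ℝ)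
    (hφ : ∀ s, φ s = -log (g s)) (hg : HasDerivAt g g' t) (hpos : 0 < g t) :
    exp (-φ t) * deriv φ t ^ 2 + κ ^ 2 * (exp (φ t) + exp (-φ t)) =
      (g' ^ 2 + κ ^ 2 * (g t ^ 2 + 1)) / g t := by
  have hφ' : HasDerivAt φ (-(g' / g t)) t := by
    rw [funext hφ]
    exact (hg.log hpos.ne').neg
  rw [hφ'.deriv, hφ, neg_neg, exp_neg, exp_log hpos]
  field_simp
  ring

theorem stmt9_general (α β κ : ℝ)
    (g : ℝ → ℝ) (hg : ∀ t, g t = Real.sinh α * Real.cos (κ * t + β) + Real.cosh α)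
    (φ : ℝ → ℝ) (hφ : ∀ t, φ t = -Real.log (g t)) :
    ∀ t : ℝ,
      0 < g t ∧
      Real.exp (-φ t) * (deriv φ t) ^ 2 + κ ^ 2 * (Real.exp (φ t) + Real.exp (-φ t)) =
        2 * κ ^ 2 * Real.cosh α := by
  intro t
  have hpos : 0 < g t := hg t ▸ sinh_mul_cos_add_cosh_pos α (κ * t + β)
  have hg' : HasDerivAt g (-(sinh α * (sin (κ * t + β) * κ))) t := by
    rw [funext hg]
    simpa using ((((hasDerivAt_id t).const_mul κ).add_const β).cos.const_mul (sinh α)).add_const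
      (cosh α)
  refine ⟨hpos, ?_⟩
  rw [exp_neg_mul_deriv_sq_add_of_eq_neg_log κ hφ hg' hpos, div_eq_iff hpos.ne', neg_sq,
    hg t, first_integral_sinh_mul_cos_add_cosh]

/-- Let `α, β, κ ∈ ℝ` with `κ ≠ 0`, let `g t = sinh(α)·cos(κt+β) + cosh(α)` (which is
strictly positive) and `φ t = −log (g t)`.  Then for all `t`,
`e^{−φ t}·(φ' t)² + κ²·(e^{φ t} + e^{−φ t}) = 2κ²·cosh(α)`; in particular the left-hand
side is constant in `t`. -/
theorem stmt9 (α β κ : ℝ) (hκ : κ ≠ 0)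
    (g : ℝ → ℝ) (hg : ∀ t, g t = Real.sinh α * Real.cos (κ * t + β) + Real.cosh α)
    (φ : ℝ → ℝ) (hφ : ∀ t, φ t = -Real.log (g t)) :
    ∀ t : ℝ,
      0 < g t ∧
      Real.exp (-φ t) * (deriv φ t) ^ 2 + κ ^ 2 * (Real.exp (φ t) + Real.exp (-φ t)) =
        2 * κ ^ 2 * Real.cosh α :=
  stmt9_general α β κ g hg φ hφ
end

section
/- Let κ be a nonzero real number and let φ : ℝ → ℝ be twice differentiable and satisfy φ″(t) − (1/2)·(φ′(t))² + (1/2)·κ²·e^{2φ(t)} = (1/2)·κ² for all t ∈ ℝ. Then there exist real numbers α and β such that e^{−φ(t)} = sinh(α)·cos(κt + β) + cosh(α) for all t ∈ ℝ. -/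
/-!
Put `ψ = e^{-φ}`. Along a solution the quantity `E = e^{-φ} (φ'² + κ²) + κ² e^{φ}` is
conserved, and the equation becomes `ψ'' + κ² ψ = E / 2`. Hence
`ψ = c + A cos (κt) + B sin (κt)` with `c = E / (2κ²) > 0`, and evaluating `E` at `t = 0`
gives `c² = 1 + A² + B²`. Writing `c = cosh α` and `A cos x + B sin x = sinh α cos (x + β)`
(amplitude and phase of `A - B i`) gives the claim.
-/

open Real

theorem Complex.norm_mul_cos_add_arg (z : ℂ) (x : ℝ) :
    ‖z‖ * Real.cos (x + z.arg) = z.re * Real.cos x - z.im * Real.sin x := by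
  rw [Real.cos_add, ← norm_mul_cos_arg, ← norm_mul_sin_arg]
  ring

theorem exists_sinh_mul_cos_add_add_cosh {c A B : ℝ} (hc : 0 < c)
    (h : c ^ 2 = 1 + A ^ 2 + B ^ 2) :
    ∃ α β : ℝ, ∀ x, c + A * cos x + B * sin x = sinh α * cos (x + β) + cosh α := by
  set z : ℂ := ⟨A, -B⟩
  have hz : ‖z‖ ^ 2 = A ^ 2 + B ^ 2 := by
    rw [Complex.sq_norm, Complex.normSq_mk]
    ring
  refine ⟨arsinh ‖z‖, z.arg, fun x => ?_⟩
  have hcosh : cosh (arsinh ‖z‖) = c := by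
    rw [cosh_arsinh, hz, ← add_assoc, ← h, sqrt_sq hc.le]
  rw [sinh_arsinh, hcosh, Complex.norm_mul_cos_add_arg]
  simp only [z]
  ring

section HarmonicOscillator

variable {κ : ℝ} {u u' : ℝ → ℝ}

theorem eq_zero_of_hasDerivAt_of_hasDerivAt_neg_sq_mul (hκ : κ ≠ 0)
    (hu : ∀ t, HasDerivAt u (u' t) t) (hu' : ∀ t, HasDerivAt u' (-κ ^ 2 * u t) t)
    (h₀ : u 0 = 0) (h₀' : u' 0 = 0) (t : ℝ) : u t = 0 := by
  have henergy (t : ℝ) : HasDerivAt (fun t => u' t ^ 2 + κ ^ 2 * u t ^ 2) 0 t :=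
    (((hu' t).pow 2).add (((hu t).pow 2).const_mul (κ ^ 2))).congr_deriv (by ring)
  have hconst := is_const_of_deriv_eq_zero (fun t => (henergy t).differentiableAt)
    (fun t => (henergy t).deriv) t 0
  simp only [h₀, h₀'] at hconst
  have : κ ^ 2 * u t ^ 2 = 0 := by nlinarith [sq_nonneg (u' t), sq_nonneg (κ * u t)]
  simpa [hκ] using this

theorem eq_cos_sin_of_hasDerivAt_of_hasDerivAt_neg_sq_mul (hκ : κ ≠ 0)
    (hu : ∀ t, HasDerivAt u (u' t) t) (hu' : ∀ t, HasDerivAt u' (-κ ^ 2 * u t) t) (t : ℝ) :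
    u t = u 0 * cos (κ * t) + u' 0 / κ * sin (κ * t) := by
  set A := u 0
  set B := u' 0 / κ
  have hlin (t : ℝ) : HasDerivAt (fun t => κ * t) κ t := by
    simpa using (hasDerivAt_id t).const_mul κ
  have hv := eq_zero_of_hasDerivAt_of_hasDerivAt_neg_sq_mul hκ
    (u := fun t => u t - (A * cos (κ * t) + B * sin (κ * t)))
    (u' := fun t => u' t - (-A * κ * sin (κ * t) + B * κ * cos (κ * t)))
    (fun t => by
      refine ((hu t).sub ((((hlin t).cos).const_mul A).add
        (((hlin t).sin).const_mul B))).congr_deriv ?_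
      ring)
    (fun t => by
      refine ((hu' t).sub ((((hlin t).sin).const_mul (-A * κ)).add
        (((hlin t).cos).const_mul (B * κ)))).congr_deriv ?_
      ring)
    (by simp [A]) (by simp [B, hκ]) t
  linarith

end HarmonicOscillator

theorem exp_neg_mul_exp_two_mul (x : ℝ) : exp (-x) * exp (2 * x) = exp x := by
  rw [← exp_add]
  ring_nf

noncomputable def liouvilleEnergy (κ : ℝ) (φ φ' : ℝ → ℝ) (t : ℝ) : ℝ :=
  exp (-φ t) * (φ' t ^ 2 + κ ^ 2) + κ ^ 2 * exp (φ t)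

section LiouvilleEquation

variable {κ : ℝ} {φ φ' φ'' : ℝ → ℝ}
  (hφ : ∀ t, HasDerivAt φ (φ' t) t) (hφ' : ∀ t, HasDerivAt φ' (φ'' t) t)
  (hode : ∀ t, φ'' t - 1 / 2 * φ' t ^ 2 + 1 / 2 * κ ^ 2 * exp (2 * φ t) = 1 / 2 * κ ^ 2)
include hφ hφ' hode

theorem liouvilleEnergy_eq (t : ℝ) : liouvilleEnergy κ φ φ' t = liouvilleEnergy κ φ φ' 0 := by
  have hderiv (t : ℝ) : HasDerivAt (liouvilleEnergy κ φ φ') 0 t := by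
    refine ((((hφ t).fun_neg.exp).mul (((hφ' t).fun_pow 2).add_const (κ ^ 2))).add
      (((hφ t).exp).const_mul (κ ^ 2))).congr_deriv ?_
    linear_combination (2 * φ' t * exp (-φ t)) * hode t
      - κ ^ 2 * φ' t * exp_neg_mul_exp_two_mul (φ t)
  exact is_const_of_deriv_eq_zero (fun t => (hderiv t).differentiableAt)
    (fun t => (hderiv t).deriv) t 0

theorem hasDerivAt_neg_mul_exp_neg (t : ℝ) :
    HasDerivAt (fun t => -φ' t * exp (-φ t))
      (liouvilleEnergy κ φ φ' t / 2 - κ ^ 2 * exp (-φ t)) t := by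
  refine ((hφ' t).fun_neg.mul (hφ t).fun_neg.exp).congr_deriv ?_
  unfold liouvilleEnergy
  linear_combination (-exp (-φ t)) * hode t + κ ^ 2 / 2 * exp_neg_mul_exp_two_mul (φ t)

theorem exists_exp_neg_eq_sinh_mul_cos_add_cosh (hκ : κ ≠ 0) :
    ∃ α β : ℝ, ∀ t, exp (-φ t) = sinh α * cos (κ * t + β) + cosh α := by
  set E := liouvilleEnergy κ φ φ' 0
  set c := E / (2 * κ ^ 2)
  have hE : 0 < E := by unfold E liouvilleEnergy; positivity
  have hψ (t : ℝ) : exp (-φ t) - c =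
      (exp (-φ 0) - c) * cos (κ * t) + -φ' 0 * exp (-φ 0) / κ * sin (κ * t) :=
    eq_cos_sin_of_hasDerivAt_of_hasDerivAt_neg_sq_mul hκ
      (u := fun t => exp (-φ t) - c) (u' := fun t => -φ' t * exp (-φ t))
      (fun t => ((hφ t).fun_neg.exp.sub_const c).congr_deriv (by ring))
      (fun t => (hasDerivAt_neg_mul_exp_neg hφ hφ' hode t).congr_deriv (by
        rw [liouvilleEnergy_eq hφ hφ' hode t]
        unfold c
        field_simp
        ring))
      t
  have hc : c ^ 2 = 1 + (exp (-φ 0) - c) ^ 2 + (-φ' 0 * exp (-φ 0) / κ) ^ 2 := by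
    unfold c E liouvilleEnergy
    rw [exp_neg]
    field_simp
    ring
  obtain ⟨α, β, h⟩ := exists_sinh_mul_cos_add_add_cosh (by positivity) hc
  exact ⟨α, β, fun t => by linarith [hψ t, h (κ * t)]⟩

end LiouvilleEquation

/-- Let `κ ≠ 0` and let `φ : ℝ → ℝ` be twice differentiable with
`φ″ − (1/2)·(φ′)² + (1/2)·κ²·e^{2φ} = (1/2)·κ²` everywhere.  Then there exist reals
`α, β` with `e^{−φ t} = sinh(α)·cos(κt + β) + cosh(α)` for all `t`. -/
theorem stmt12 (κ : ℝ) (hκ : κ ≠ 0) (φ : ℝ → ℝ)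
    (hφ : Differentiable ℝ φ) (hφ' : Differentiable ℝ (deriv φ))
    (hode : ∀ t : ℝ,
      deriv (deriv φ) t - (1 / 2) * (deriv φ t) ^ 2 +
        (1 / 2) * κ ^ 2 * Real.exp (2 * φ t) = (1 / 2) * κ ^ 2) :
    ∃ α β : ℝ, ∀ t : ℝ,
      Real.exp (-φ t) = Real.sinh α * Real.cos (κ * t + β) + Real.cosh α :=
  exists_exp_neg_eq_sinh_mul_cos_add_cosh (fun t => (hφ t).hasDerivAt)
    (fun t => (hφ' t).hasDerivAt) hode hκ
end
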